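/- arXiv:2408.16108 — 2 statements merged into one kernel-verified Lean document; each statement's English description precedes it below -/
import Mathlib

section
/- Let M be an n×n integer matrix with rows r_1,...,r_n, where row i equals (⟨μ_i a_1⟩_p,...,⟨μ_i a_n⟩_p) for integers μ_i. If M is invertible over ℚ and every row satisfies ‖r_i‖₁ < p/2, then for every target T ∈ ℤ there is at most one vector e ∈ {0,1}^n with Σ e_j a_j ≡ T (mod p); moreover any e ∈ {0,1}^n with Σ e_j a_j = T is the unique solution of M·e = (⟨μ_1 T⟩_p,...,⟨μ_n T⟩_p). -/
/-- The centered residue of `x` modulo `p`: for odd `p > 0`, the unique representative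
of `x mod p` in `(-p/2, p/2)`. -/
def cres (p x : ℤ) : ℤ := if x % p ≤ p / 2 then x % p else x % p - p

lemma cres_modEq (p x : ℤ) : cres p x ≡ x [ZMOD p] := by
  unfold cres
  split_ifs with h
  · exact Int.emod_emod_of_dvd x dvd_rfl
  · show (x % p - p) % p = x % p
    simp [Int.sub_emod, Int.emod_emod_of_dvd x dvd_rfl]

lemma cres_bound (p x : ℤ) (hp : 0 < p) (hodd : Odd p) : 2 * |cres p x| < p := by
  obtain ⟨k, hk⟩ := hodd
  have h1 : 0 ≤ x % p := Int.emod_nonneg x hp.ne'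
  have h2 : x % p < p := Int.emod_lt_of_pos x hp
  unfold cres
  split_ifs with h
  · rw [abs_of_nonneg h1]; omega
  · rw [abs_of_nonpos (by omega)]; omega

lemma eq_of_modEq_bound {p u v : ℤ} (h : u ≡ v [ZMOD p]) (hu : 2 * |u| < p)
    (hv : 2 * |v| < p) : u = v := by
  have hd := h.dvd
  have h3 : |v - u| < p := by
    have hn1 := abs_nonneg u
    have hn2 := abs_nonneg v
    have habs : |v - u| ≤ |v| + |u| := abs_sub _ _
    omega
  have := Int.eq_zero_of_abs_lt_dvd hd h3
  omega

lemma sum_modEq {ι : Type*} (s : Finset ι) (p : ℤ) (f g : ι → ℤ)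
    (h : ∀ i ∈ s, f i ≡ g i [ZMOD p]) :
    (∑ i ∈ s, f i) ≡ (∑ i ∈ s, g i) [ZMOD p] := by
  classical
  induction s using Finset.induction_on with
  | empty => simp
  | insert _ _ hx ih =>
      rw [Finset.sum_insert hx, Finset.sum_insert hx]
      exact (h _ (Finset.mem_insert_self _ _)).add
        (ih fun i hi => h i (Finset.mem_insert_of_mem hi))

theorem stmt2 (n : ℕ) (p : ℤ) (hp : 0 < p) (hodd : Odd p)
    (a μ : Fin n → ℤ) (M : Matrix (Fin n) (Fin n) ℤ)
    (hM : ∀ i j, M i j = cres p (μ i * a j))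
    (hdet : (M.map (Int.cast : ℤ → ℚ)).det ≠ 0)
    (hrow : ∀ i, 2 * ∑ j, |M i j| < p) :
    ∀ T : ℤ,
      (∀ e e' : Fin n → ℤ, (∀ j, e j = 0 ∨ e j = 1) → (∀ j, e' j = 0 ∨ e' j = 1) →
        (∑ j, e j * a j) ≡ T [ZMOD p] → (∑ j, e' j * a j) ≡ T [ZMOD p] → e = e') ∧
      (∀ e : Fin n → ℤ, (∀ j, e j = 0 ∨ e j = 1) → (∑ j, e j * a j) = T →
        (M.mulVec e = fun i => cres p (μ i * T)) ∧
          ∀ f : Fin n → ℤ, M.mulVec f = (fun i => cres p (μ i * T)) → f = e) := by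
  have hmv : ∀ (v : Fin n → ℤ) i, M.mulVec v i = ∑ j, M i j * v j := by
    intro v i; rfl
  have hinj : Function.Injective (fun v : Fin n → ℤ => M.mulVec v) := by
    have hQ : Function.Injective (M.map (Int.cast : ℤ → ℚ)).mulVec :=
      Matrix.mulVec_injective_iff_isUnit.mpr
        ((Matrix.isUnit_iff_isUnit_det _).mpr (isUnit_iff_ne_zero.mpr hdet))
    have hcast : ∀ (u : Fin n → ℤ) (i : Fin n),
        (M.map (Int.cast : ℤ → ℚ)).mulVec (fun j => (u j : ℚ)) i
          = ((M.mulVec u i : ℤ) : ℚ) := by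
      intro u i
      simp only [Matrix.mulVec, dotProduct, Matrix.map_apply]
      push_cast
      rfl
    intro u v huv
    have huv' : M.mulVec u = M.mulVec v := huv
    have h2 : (M.map (Int.cast : ℤ → ℚ)).mulVec (fun j => (u j : ℚ))
        = (M.map (Int.cast : ℤ → ℚ)).mulVec (fun j => (v j : ℚ)) := by
      funext i
      rw [hcast, hcast]
      exact_mod_cast congrFun huv' i
    have h3 := hQ h2
    funext j
    exact_mod_cast congrFun h3 j
  intro T
  have key : ∀ e : Fin n → ℤ, (∀ j, e j = 0 ∨ e j = 1) →
      (∑ j, e j * a j) ≡ T [ZMOD p] →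
      M.mulVec e = fun i => cres p (μ i * T) := by
    intro e he hsum
    funext i
    have hc : M.mulVec e i ≡ μ i * T [ZMOD p] := by
      have h1 : M.mulVec e i ≡ ∑ j, (μ i * a j) * e j [ZMOD p] := by
        rw [hmv]
        exact sum_modEq _ _ _ _ (fun j _ => by
          rw [hM]; exact (cres_modEq p _).mul_right _)
      have h2 : (∑ j, (μ i * a j) * e j) = μ i * ∑ j, e j * a j := by
        rw [Finset.mul_sum]
        exact Finset.sum_congr rfl (fun j _ => by ring)
      exact h1.trans (h2 ▸ hsum.mul_left (μ i))
    have hbound : |M.mulVec e i| ≤ ∑ j, |M i j| := by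
      rw [hmv]
      refine (Finset.abs_sum_le_sum_abs _ _).trans ?_
      refine Finset.sum_le_sum (fun j _ => ?_)
      rw [abs_mul]
      rcases he j with h | h <;> simp [h]
    exact eq_of_modEq_bound (hc.trans (cres_modEq p (μ i * T)).symm)
      (by have := hrow i; omega) (cres_bound p _ hp hodd)
  refine ⟨?_, ?_⟩
  · intro e e' he he' hs hs'
    exact hinj ((key e he hs).trans ((key e' he' hs').symm))
  · intro e he hsum
    have h1 := key e he (by rw [hsum])
    exact ⟨h1, fun f hf => hinj (hf.trans h1.symm)⟩
end

section
/- Let v be a vector in the lattice L generated by (a_1,...,a_n) and the vectors p·e_i, and suppose every coordinate of v lies in {-⌊p/2⌋,...,⌊p/2⌋}. Then there exists μ ∈ ℤ such that v = (⟨μa_1⟩_p,...,⟨μa_n⟩_p). Moreover if gcd(a_1,p)=1 then μ is unique modulo p and satisfies μ ≡ v_1·a_1^{-1} (mod p). -/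
lemma cres_mod (p x : ℤ) : cres p x % p = x % p := by
  unfold cres
  split <;> simp [Int.sub_emod, Int.emod_emod_of_dvd]

lemma cres_dvd_sub (p x : ℤ) : p ∣ cres p x - x := by
  apply Int.dvd_of_emod_eq_zero
  rw [Int.sub_emod, cres_mod p x]
  simp

lemma cres_eq_of (p x y : ℤ) (hp : 0 < p) (hodd : Odd p) (hb : |y| ≤ p / 2)
    (hc : p ∣ y - x) : y = cres p x := by
  have h3 := Int.emod_nonneg x hp.ne'
  have h4 := Int.emod_lt_of_pos x hp
  have hpo : p % 2 = 1 := Int.odd_iff.mp hodd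
  have h2 : |cres p x| ≤ p / 2 := by
    unfold cres
    split <;> rw [abs_le] <;> omega
  have hd : p ∣ y - cres p x := by
    have := cres_dvd_sub p x
    have : y - cres p x = (y - x) - (cres p x - x) := by ring
    rw [this]
    exact dvd_sub hc (cres_dvd_sub p x)
  have habs : |y - cres p x| < p := by
    rw [abs_le] at hb h2
    rw [abs_lt]
    omega
  have := Int.eq_zero_of_abs_lt_dvd hd habs
  omega

theorem stmt4 (n : ℕ) (hn : 0 < n) (p : ℤ) (hp : 0 < p) (hodd : Odd p)
    (a : Fin n → ℤ) (v : Fin n → ℤ)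
    (hv : v ∈ Submodule.span ℤ
        (insert a (Set.range fun i : Fin n => p • Pi.single i (1 : ℤ))))
    (hbound : ∀ i, |v i| ≤ p / 2) :
    (∃ μ : ℤ, v = fun i => cres p (μ * a i)) ∧
    (IsCoprime (a ⟨0, hn⟩) p →
      ∀ b : ℤ, a ⟨0, hn⟩ * b ≡ 1 [ZMOD p] →
        ∀ μ : ℤ, (v = fun i => cres p (μ * a i)) →
          μ ≡ v ⟨0, hn⟩ * b [ZMOD p]) := by
  constructor
  · rw [Submodule.mem_span_insert] at hv
    obtain ⟨μ, z, hz, hvz⟩ := hv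
    have hzdvd : ∀ i, p ∣ z i := by
      have hle : Submodule.span ℤ (Set.range fun i : Fin n => p • Pi.single i (1 : ℤ))
          ≤ Submodule.pi Set.univ (fun _ : Fin n => Ideal.span {p}) := by
        rw [Submodule.span_le]
        rintro _ ⟨i, rfl⟩ j _
        by_cases h : i = j
        · subst h
          simp [Ideal.mem_span_singleton]
        · simp [Pi.single_eq_of_ne (Ne.symm h)]
      intro i
      exact Ideal.mem_span_singleton.mp (by simpa using hle hz i (Set.mem_univ i))
    refine ⟨μ, funext fun i => ?_⟩
    apply cres_eq_of p _ _ hp hodd (hbound i)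
    have hvi : v i = μ * a i + z i := by rw [hvz]; simp
    obtain ⟨k, hk⟩ := hzdvd i
    refine ⟨k, by rw [hvi, hk]; ring⟩
  · intro _ b hb μ hμ
    have h0 : v ⟨0, hn⟩ = cres p (μ * a ⟨0, hn⟩) := by rw [hμ]
    have h1 : v ⟨0, hn⟩ ≡ μ * a ⟨0, hn⟩ [ZMOD p] := by
      rw [h0]
      show cres p (μ * a ⟨0, hn⟩) % p = (μ * a ⟨0, hn⟩) % p
      exact cres_mod p _
    calc μ ≡ μ * (a ⟨0, hn⟩ * b) [ZMOD p] := by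
            conv_lhs => rw [← mul_one μ]
            exact (Int.ModEq.mul_left μ hb).symm
      _ = (μ * a ⟨0, hn⟩) * b := by ring
      _ ≡ v ⟨0, hn⟩ * b [ZMOD p] := Int.ModEq.mul_right b h1.symm
end
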